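/- arXiv:2409.02013 — 2 statements merged into one kernel-verified Lean document; each statement's English description precedes it below -/
import Mathlib

section
/- Let (R_i)_{i∈ℕ} be an i.i.d. sequence of random variables with values in a countable set 𝒜, each with full support (P(R_1 = S) > 0 for all S ∈ 𝒜), independent of an i.i.d. positive-integer sequence (K_i) satisfying limsup(K_i − i) = +∞ a.s. Then almost surely, for every S ∈ 𝒜 and every C > 0 there exist infinitely many i with R_{K_i} = S and K_i − i > C. -/
open MeasureTheory ProbabilityTheory Filter
open scoped ENNReal

section Aux

variable {Ω A : Type*} [MeasurableSpace Ω] [MeasurableSpace A]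

/-- independence of preimage sets along an injective subsequence -/
lemma aux_iIndepSet [MeasurableSingletonClass A]
    {μ : Measure Ω} {R : ℕ → Ω → A} (hRmeas : ∀ i, Measurable (R i))
    (h : iIndepFun R μ) (S : A)
    {m : ℕ → ℕ} (hm : Function.Injective m) :
    iIndepSet (fun j => R (m j) ⁻¹' {S}) μ := by
  rw [iIndepSet_iff_meas_biInter (fun j => hRmeas (m j) (measurableSet_singleton S))]
  intro t
  have := h.measure_inter_preimage_eq_mul (t.image m) (sets := fun _ => {S})
    (fun i _ => measurableSet_singleton S)
  rwa [Finset.set_biInter_finset_image, Finset.prod_image (fun a _ b _ hab => hm hab)] at this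

/-- core Borel–Cantelli step: for a fixed deterministic sequence `k` with
`{i | i + C < k i}` infinite, a.s. infinitely many `i` satisfy `R (k i) = S`. -/
lemma aux_bc [MeasurableSingletonClass A]
    {μ : Measure Ω} [IsProbabilityMeasure μ] {R : ℕ → Ω → A}
    (hRmeas : ∀ i, Measurable (R i))
    (hRindep : iIndepFun R μ)
    (hRident : ∀ i j, IdentDistrib (R i) (R j) μ μ)
    (S : A) (hfull : 0 < μ {ω | R 0 ω = S}) (C : ℕ)
    (k : ℕ → ℕ) (hk : {i : ℕ | i + C < k i}.Infinite) :
    ∀ᵐ ω ∂μ, {i : ℕ | R (k i) ω = S ∧ i + C < k i}.Infinite := by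
  set I : Set ℕ := {i : ℕ | i + C < k i} with hI
  -- choose a subsequence n with n j ∈ I and k ∘ n strictly increasing
  have hex : ∀ b : ℕ, ∃ c, c ∈ I ∧ b < c := fun b => by
    obtain ⟨c, hc, hbc⟩ := hk.exists_gt b; exact ⟨c, hc, hbc⟩
  choose f hfI hfgt using hex
  let n : ℕ → ℕ := fun j => Nat.rec (f 0) (fun _ prev => f (k prev)) j
  have hnI : ∀ j, n j ∈ I := by
    intro j; cases j with
    | zero => exact hfI 0
    | succ j => exact hfI (k (n j))
  have hstep : ∀ j, k (n j) < n (j + 1) := fun j => hfgt (k (n j))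
  have hkn : StrictMono (fun j => k (n j)) := by
    apply strictMono_nat_of_lt_succ
    intro j
    have h1 : k (n j) < n (j + 1) := hstep j
    have h2 : n (j + 1) + C < k (n (j + 1)) := hnI (j + 1)
    omega
  have hnmono : StrictMono n := by
    apply strictMono_nat_of_lt_succ
    intro j
    have h1 : n j + C < k (n j) := hnI j
    have h2 : k (n j) < n (j + 1) := hstep j
    omega
  set m : ℕ → ℕ := fun j => k (n j) with hm
  set s : ℕ → Set Ω := fun j => R (m j) ⁻¹' {S} with hs
  have hsm : ∀ j, MeasurableSet (s j) := fun j => hRmeas (m j) (measurableSet_singleton S)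
  have hindep : iIndepSet s μ := aux_iIndepSet hRmeas hRindep S hkn.injective
  have hmeas_eq : ∀ j, μ (s j) = μ {ω | R 0 ω = S} := by
    intro j
    have := (hRident (m j) 0).measure_mem_eq (measurableSet_singleton S)
    simpa [hs, Set.preimage, Set.mem_singleton_iff] using this
  have hsum : (∑' j, μ (s j)) = ∞ := by
    rw [tsum_congr hmeas_eq]
    exact ENNReal.tsum_const_eq_top_of_ne_zero hfull.ne'
  have hlimsup := measure_limsup_eq_one hsm hindep hsum
  have hae : ∀ᵐ ω ∂μ, ω ∈ limsup s atTop := by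
    rw [ae_iff]
    have hcompl : {ω | ¬ ω ∈ limsup s atTop} = (limsup s atTop)ᶜ := rfl
    rw [hcompl, measure_compl (MeasurableSet.measurableSet_limsup hsm) (measure_ne_top _ _),
      hlimsup, measure_univ, tsub_self]
  filter_upwards [hae] with ω hω
  rw [limsup_eq_iInf_iSup_of_nat] at hω
  simp only [Set.iInf_eq_iInter, Set.iSup_eq_iUnion, Set.mem_iInter, Set.mem_iUnion] at hω
  apply Set.infinite_of_forall_exists_gt
  intro a
  obtain ⟨j, hja, hjs⟩ := hω (a + 1)
  refine ⟨n j, ?_, ?_⟩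
  · refine ⟨?_, hnI j⟩
    simpa [hs, hm] using hjs
  · have := hnmono.le_apply (x := j)
    have h1 : a + 1 ≤ j := hja
    omega

end Aux

theorem stmt_16 {Ω A : Type*} [MeasurableSpace Ω] [MeasurableSpace A] [Countable A]
    [MeasurableSingletonClass A]
    (μ : Measure Ω) [IsProbabilityMeasure μ]
    (R : ℕ → Ω → A) (K : ℕ → Ω → ℕ)
    (hRmeas : ∀ i, Measurable (R i)) (hKmeas : ∀ i, Measurable (K i))
    (hRindep : iIndepFun R μ)
    (hRident : ∀ i j, IdentDistrib (R i) (R j) μ μ)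
    (hfull : ∀ S : A, 0 < μ {ω | R 0 ω = S})
    (hRK : IndepFun (fun ω i => R i ω) (fun ω i => K i ω) μ)
    (hK : ∀ᵐ ω ∂μ, ∀ C : ℕ, {i : ℕ | i + C < K i ω}.Infinite) :
    ∀ᵐ ω ∂μ, ∀ S : A, ∀ C : ℕ,
      {i : ℕ | R (K i ω) ω = S ∧ i + C < K i ω}.Infinite := by
  rw [ae_all_iff]
  intro S
  rw [ae_all_iff]
  intro C
  -- the two process maps
  set X : Ω → (ℕ → A) := fun ω i => R i ω with hX
  set Y : Ω → (ℕ → ℕ) := fun ω i => K i ω with hY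
  have hXm : Measurable X := measurable_pi_lambda X hRmeas
  have hYm : Measurable Y := measurable_pi_lambda Y hKmeas
  -- the target set in the product space (ℕ→ℕ) × (ℕ→A)
  set G : Set ((ℕ → ℕ) × (ℕ → A)) :=
    {z | {i : ℕ | z.2 (z.1 i) = S ∧ i + C < z.1 i}.Infinite} with hG
  -- measurability of G
  have heval : ∀ i : ℕ, Measurable (fun z : (ℕ → ℕ) × (ℕ → A) => z.2 (z.1 i)) := by
    intro i
    have h1 : Measurable (fun p : (ℕ → A) × ℕ => p.1 p.2) :=
      measurable_from_prod_countable_left fun nv => measurable_pi_apply nv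
    exact h1.comp ((measurable_snd).prodMk ((measurable_pi_apply i).comp measurable_fst))
  have hSi : ∀ i : ℕ, MeasurableSet
      {z : (ℕ → ℕ) × (ℕ → A) | z.2 (z.1 i) = S ∧ i + C < z.1 i} := by
    intro i
    exact ((heval i) (measurableSet_singleton S)).inter
      (measurable_fst.eval measurableSet_Ioi)
  have hGmeas : MeasurableSet G := by
    have : G = ⋂ N : ℕ, ⋃ i : ℕ, ⋃ (_ : N < i),
        {z : (ℕ → ℕ) × (ℕ → A) | z.2 (z.1 i) = S ∧ i + C < z.1 i} := by
      ext z
      simp only [hG, Set.mem_setOf_eq, Set.mem_iInter, Set.mem_iUnion]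
      constructor
      · intro hinf N
        obtain ⟨i, hi, hNi⟩ := hinf.exists_gt N
        exact ⟨i, hNi, hi⟩
      · intro h
        apply Set.infinite_of_forall_exists_gt
        intro a
        obtain ⟨i, hai, hi⟩ := h a
        exact ⟨i, hi, hai⟩
    rw [this]
    exact MeasurableSet.iInter fun N => MeasurableSet.iUnion fun i =>
      MeasurableSet.iUnion fun _ => hSi i
  -- the map to the product space
  have hpair : μ.map (fun ω => (Y ω, X ω)) = (μ.map Y).prod (μ.map X) :=
    (indepFun_iff_map_prod_eq_prod_map_map hYm.aemeasurable hXm.aemeasurable).mp hRK.symm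
  have hPX : IsProbabilityMeasure (μ.map X) := Measure.isProbabilityMeasure_map hXm.aemeasurable
  have hPY : IsProbabilityMeasure (μ.map Y) := Measure.isProbabilityMeasure_map hYm.aemeasurable
  -- reduce the goal to the product space statement
  have hgoal : (∀ᵐ z ∂((μ.map Y).prod (μ.map X)), z ∈ G) →
      ∀ᵐ ω ∂μ, {i : ℕ | R (K i ω) ω = S ∧ i + C < K i ω}.Infinite := by
    intro h
    rw [← hpair] at h
    have := (ae_map_iff (hYm.prodMk hXm).aemeasurable hGmeas).mp h
    filter_upwards [this] with ω hω
    exact hω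
  apply hgoal
  rw [ae_iff]
  have hGc : {z : (ℕ → ℕ) × (ℕ → A) | ¬ z ∈ G} = Gᶜ := rfl
  rw [hGc, Measure.measure_prod_null hGmeas.compl]
  -- transfer hK to the law of Y
  have hIK : MeasurableSet {k : ℕ → ℕ | {i : ℕ | i + C < k i}.Infinite} := by
    have : {k : ℕ → ℕ | {i : ℕ | i + C < k i}.Infinite} =
        ⋂ N : ℕ, ⋃ i : ℕ, ⋃ (_ : N < i), {k : ℕ → ℕ | i + C < k i} := by
      ext k
      simp only [Set.mem_setOf_eq, Set.mem_iInter, Set.mem_iUnion]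
      constructor
      · intro hinf N
        obtain ⟨i, hi, hNi⟩ := hinf.exists_gt N
        exact ⟨i, hNi, hi⟩
      · intro h
        apply Set.infinite_of_forall_exists_gt
        intro a
        obtain ⟨i, hai, hi⟩ := h a
        exact ⟨i, hi, hai⟩
    rw [this]
    exact MeasurableSet.iInter fun N => MeasurableSet.iUnion fun i =>
      MeasurableSet.iUnion fun _ => measurable_pi_apply i measurableSet_Ioi
  have hKlaw : ∀ᵐ k ∂(μ.map Y), {i : ℕ | i + C < k i}.Infinite := by
    rw [ae_map_iff hYm.aemeasurable hIK]
    filter_upwards [hK] with ω hω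
    exact hω C
  have hzero : ∀ k : ℕ → ℕ, {i : ℕ | i + C < k i}.Infinite →
      (μ.map X) (Prod.mk k ⁻¹' Gᶜ) = 0 := by
    intro k hk
    have hsec : MeasurableSet {r : ℕ → A | {i : ℕ | r (k i) = S ∧ i + C < k i}.Infinite} := by
      have : {r : ℕ → A | {i : ℕ | r (k i) = S ∧ i + C < k i}.Infinite} =
          ⋂ N : ℕ, ⋃ i : ℕ, ⋃ (_ : N < i), {r : ℕ → A | r (k i) = S ∧ i + C < k i} := by
        ext r
        simp only [Set.mem_setOf_eq, Set.mem_iInter, Set.mem_iUnion]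
        constructor
        · intro hinf N
          obtain ⟨i, hi, hNi⟩ := hinf.exists_gt N
          exact ⟨i, hNi, hi⟩
        · intro h
          apply Set.infinite_of_forall_exists_gt
          intro a
          obtain ⟨i, hai, hi⟩ := h a
          exact ⟨i, hi, hai⟩
      rw [this]
      refine MeasurableSet.iInter fun N => MeasurableSet.iUnion fun i =>
        MeasurableSet.iUnion fun _ => ?_
      by_cases hC : i + C < k i
      · have : {r : ℕ → A | r (k i) = S ∧ i + C < k i} = {r : ℕ → A | r (k i) = S} := by
          ext r; simp [hC]
        rw [this]
        exact measurable_pi_apply (X := fun _ : ℕ => A) (k i) (measurableSet_singleton S)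
      · have : {r : ℕ → A | r (k i) = S ∧ i + C < k i} = ∅ := by
          ext r; simp [hC]
        rw [this]; exact MeasurableSet.empty
    have : ∀ᵐ r ∂(μ.map X), {i : ℕ | r (k i) = S ∧ i + C < k i}.Infinite := by
      rw [ae_map_iff hXm.aemeasurable hsec]
      exact aux_bc hRmeas hRindep hRident S (hfull S) C k hk
    exact ae_iff.mp this
  filter_upwards [hKlaw] with k hk
  exact hzero k hk
end

section
/- Let G be a countable group acting measurably on a standard probability space (X, m) by measure-class-preserving maps, and let S ⊆ G be finite. If there is a positive-measure subset of x ∈ X whose stabilizer Stab_G(x) is disjoint from S, then there exists a positive-measure subset Q of X such that t·Q ∩ Q is null for every t ∈ S. -/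
open MeasureTheory

theorem stmt_17 {G X : Type*} [Group G] [Countable G] [MeasurableSpace X]
    [StandardBorelSpace X] [MulAction G X]
    (m : Measure X) [IsProbabilityMeasure m]
    (hmeas : ∀ g : G, Measurable (fun x : X => g • x))
    (hclass : ∀ g : G, m.map (fun x : X => g • x) ≪ m ∧ m ≪ m.map (fun x : X => g • x))
    (S : Finset G)
    (hpos : 0 < m {x | ∀ s ∈ S, s • x ≠ x}) :
    ∃ Q : Set X, MeasurableSet Q ∧ 0 < m Q ∧
      ∀ t ∈ S, m ((fun x => t • x) '' Q ∩ Q) = 0 := by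
  classical
  obtain ⟨f, hf⟩ := exists_measurableEmbedding_real X
  set Q : (S → ℚ × Bool) → Set X := fun c =>
    ⋂ s : S, {x : X |
      if (c s).2 then f x < (c s).1 ∧ ((c s).1 : ℝ) < f ((s : G) • x)
      else f ((s : G) • x) < (c s).1 ∧ ((c s).1 : ℝ) < f x} with hQdef
  have hQmeas : ∀ c, MeasurableSet (Q c) := by
    intro c
    refine MeasurableSet.iInter fun s => ?_
    have h1 : Measurable fun x : X => f ((s : G) • x) := hf.measurable.comp (hmeas s)
    by_cases hb : (c s).2
    · simp only [hb, if_true]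
      exact (measurableSet_lt hf.measurable measurable_const).inter
        (measurableSet_lt measurable_const h1)
    · simp only [hb, if_false]
      exact (measurableSet_lt h1 measurable_const).inter
        (measurableSet_lt measurable_const hf.measurable)
  have hcov : {x : X | ∀ s ∈ S, s • x ≠ x} ⊆ ⋃ c, Q c := by
    intro x hx
    have hchoice : ∀ s : S, ∃ p : ℚ × Bool,
        (if p.2 then f x < p.1 ∧ (p.1 : ℝ) < f ((s : G) • x)
         else f ((s : G) • x) < p.1 ∧ (p.1 : ℝ) < f x) := by
      intro s
      have hne : f ((s : G) • x) ≠ f x := fun h => hx s s.2 (hf.injective h)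
      rcases lt_or_gt_of_ne hne with h | h
      · obtain ⟨q, hq1, hq2⟩ := exists_rat_btwn h
        exact ⟨(q, false), by simpa using ⟨hq1, hq2⟩⟩
      · obtain ⟨q, hq1, hq2⟩ := exists_rat_btwn h
        exact ⟨(q, true), by simpa using ⟨hq1, hq2⟩⟩
    choose c hc using hchoice
    exact Set.mem_iUnion.2 ⟨c, Set.mem_iInter.2 hc⟩
  have hex : ∃ c, 0 < m (Q c) := by
    by_contra h
    push_neg at h
    have h0 : m (⋃ c, Q c) = 0 :=
      measure_iUnion_null fun c => le_antisymm (h c) zero_le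
    exact hpos.ne' (measure_mono_null hcov h0)
  obtain ⟨c, hc⟩ := hex
  refine ⟨Q c, hQmeas c, hc, fun t ht => ?_⟩
  have hempty : (fun x => t • x) '' Q c ∩ Q c = ∅ := by
    ext y
    simp only [Set.mem_inter_iff, Set.mem_image, Set.mem_empty_iff_false, iff_false, not_and]
    rintro ⟨x, hxQ, rfl⟩ hyQ
    have h1 := Set.mem_iInter.1 hxQ ⟨t, ht⟩
    have h2 := Set.mem_iInter.1 hyQ ⟨t, ht⟩
    simp only [Set.mem_setOf_eq] at h1 h2
    by_cases hb : (c ⟨t, ht⟩).2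
    · simp only [hb, if_true] at h1 h2
      exact lt_asymm h1.2 h2.1
    · simp only [hb, if_false] at h1 h2
      exact lt_asymm h1.1 h2.2
  rw [hempty]
  exact measure_empty
end
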